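/- Let φ(x) be a MAJ_2[<] formula of depth at most k with exactly one free variable x. Then there exists a TL[#←,#→] formula φ' of depth at most k such that for all nonempty strings w and all positions i ∈ [1,|w|]: w with the assignment x ↦ i satisfies φ(x) if and only if w,i ⊨ φ'. -/
import Mathlib


mutual
  /-- Formulas of TL[#←,#→]. -/
  inductive TL2Formula (σ : Type) : Type
    | sym : σ → TL2Formula σ
    | lt : TL2Term σ → TL2Term σ → TL2Formula σ
    | not : TL2Formula σ → TL2Formula σ
    | and : TL2Formula σ → TL2Formula σ → TL2Formula σ
  /-- Terms of TL[#←,#→]. -/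
  inductive TL2Term (σ : Type) : Type
    | countL : TL2Formula σ → TL2Term σ
    | countR : TL2Formula σ → TL2Term σ
    | add : TL2Term σ → TL2Term σ → TL2Term σ
    | one : TL2Term σ
end

mutual
  /-- Satisfaction `w,i ⊨ φ` (positions are 0-indexed, `0 ≤ i < |w|`). -/
  def TL2Formula.sat {σ : Type} [DecidableEq σ] : TL2Formula σ → List σ → ℕ → Bool
    | .sym c, w, i => decide (w[i]? = some c)
    | .lt t₁ t₂, w, i => decide (TL2Term.val t₁ w i < TL2Term.val t₂ w i)
    | .not φ, w, i => !(TL2Formula.sat φ w i)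
    | .and φ₁ φ₂, w, i => TL2Formula.sat φ₁ w i && TL2Formula.sat φ₂ w i
  /-- Value `t^{w,i}`: `#←[φ]` counts positions `j ≤ i` satisfying `φ`, and
  `#→[φ]` counts positions `i ≤ j < |w|` satisfying `φ`. -/
  def TL2Term.val {σ : Type} [DecidableEq σ] : TL2Term σ → List σ → ℕ → ℕ
    | .countL φ, w, i => ((List.range (i + 1)).filter (fun j => TL2Formula.sat φ w j)).length
    | .countR φ, w, i =>
        ((List.range w.length).filter (fun j => decide (i ≤ j) && TL2Formula.sat φ w j)).length
    | .add t₁ t₂, w, i => TL2Term.val t₁ w i + TL2Term.val t₂ w i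
    | .one, _, _ => 1
end

mutual
  /-- Nesting depth of `#←`/`#→` in a formula. -/
  def TL2Formula.depth {σ : Type} : TL2Formula σ → ℕ
    | .sym _ => 0
    | .lt t₁ t₂ => max (TL2Term.depth t₁) (TL2Term.depth t₂)
    | .not φ => TL2Formula.depth φ
    | .and φ₁ φ₂ => max (TL2Formula.depth φ₁) (TL2Formula.depth φ₂)
  /-- Nesting depth of `#←`/`#→` in a term. -/
  def TL2Term.depth {σ : Type} : TL2Term σ → ℕ
    | .countL φ => TL2Formula.depth φ + 1
    | .countR φ => TL2Formula.depth φ + 1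
    | .add t₁ t₂ => max (TL2Term.depth t₁) (TL2Term.depth t₂)
    | .one => 0
end

/-- `φ` defines `L`: a nonempty string is in `L` iff `φ` is satisfied at its last position. -/
def TL2Formula.defines {σ : Type} [DecidableEq σ] (φ : TL2Formula σ) (L : Set (List σ)) : Prop :=
  ∀ w : List σ, w ≠ [] → (w ∈ L ↔ φ.sat w (w.length - 1) = true)

/-- Formulas of the two-variable majority logic MAJ₂[<].  The constructors `majx ψ ψs`
and `majy ψ ψs` represent the majority quantifiers `MAĴ_x⟨ψ :: ψs⟩`, `MAĴ_y⟨ψ :: ψs⟩`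
over the nonempty list `ψ :: ψs` of formulas (so `m ≥ 1`). -/
inductive MAJ (σ : Type) : Type
  | qx : σ → MAJ σ
  | qy : σ → MAJ σ
  | xlty : MAJ σ
  | yltx : MAJ σ
  | not : MAJ σ → MAJ σ
  | and : MAJ σ → MAJ σ → MAJ σ
  | majx : MAJ σ → List (MAJ σ) → MAJ σ
  | majy : MAJ σ → List (MAJ σ) → MAJ σ

namespace MAJ

/-- Satisfaction `w, ξ ⊨ φ` where the partial assignment `ξ` is given by the two
optional (0-indexed) positions `ox` (for `x`) and `oy` (for `y`).
`MAĴ_y⟨φ₁,…,φₘ⟩` holds iff `Σ_{j=1}^{|w|} Σ_{ℓ=1}^{m} 1[w, ξ[y↦j] ⊨ φℓ] > |w|·m/2`. -/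
def sat {σ : Type} [DecidableEq σ] : MAJ σ → List σ → Option ℕ → Option ℕ → Bool
  | .qx c, w, ox, _ => match ox with
    | some i => decide (w[i]? = some c)
    | none => false
  | .qy c, w, _, oy => match oy with
    | some j => decide (w[j]? = some c)
    | none => false
  | .xlty, _, ox, oy => match ox, oy with
    | some i, some j => decide (i < j)
    | _, _ => false
  | .yltx, _, ox, oy => match ox, oy with
    | some i, some j => decide (j < i)
    | _, _ => false
  | .not φ, w, ox, oy => !(sat φ w ox oy)
  | .and φ₁ φ₂, w, ox, oy => sat φ₁ w ox oy && sat φ₂ w ox oy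
  | .majx ψ ψs, w, _, oy =>
      decide (w.length * (ψ :: ψs).length <
        2 * ((List.range w.length).map (fun i =>
          (((ψ :: ψs).attach).map (fun f =>
            if sat f.1 w (some i) oy then 1 else 0)).sum)).sum)
  | .majy ψ ψs, w, ox, _ =>
      decide (w.length * (ψ :: ψs).length <
        2 * ((List.range w.length).map (fun j =>
          (((ψ :: ψs).attach).map (fun f =>
            if sat f.1 w ox (some j) then 1 else 0)).sum)).sum)
termination_by φ _ _ _ => sizeOf φ
decreasing_by
  all_goals simp_wf
  all_goals try omega
  all_goals
    first
      | (have h := List.sizeOf_lt_of_mem f.2; simp at h; omega)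

end MAJ

namespace MAJ

/-- The depth of a MAJ₂[<] formula: the maximum nesting of `MAĴ` quantifiers. -/
def depth {σ : Type} : MAJ σ → ℕ
  | .qx _ => 0
  | .qy _ => 0
  | .xlty => 0
  | .yltx => 0
  | .not φ => depth φ
  | .and φ₁ φ₂ => max (depth φ₁) (depth φ₂)
  | .majx ψ ψs => 1 + ((ψ :: ψs).attach.map (fun f => depth f.1)).foldr max 0
  | .majy ψ ψs => 1 + ((ψ :: ψs).attach.map (fun f => depth f.1)).foldr max 0
termination_by φ => sizeOf φ
decreasing_by
  all_goals simp_wf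
  all_goals try omega
  all_goals (have h := List.sizeOf_lt_of_mem f.2; simp at h; omega)

/-- Whether the variable `x` occurs free. -/
def freeX {σ : Type} : MAJ σ → Bool
  | .qx _ => true
  | .qy _ => false
  | .xlty => true
  | .yltx => true
  | .not φ => freeX φ
  | .and φ₁ φ₂ => freeX φ₁ || freeX φ₂
  | .majx _ _ => false
  | .majy ψ ψs => (ψ :: ψs).attach.any (fun f => freeX f.1)
termination_by φ => sizeOf φ
decreasing_by
  all_goals simp_wf
  all_goals try omega
  all_goals (have h := List.sizeOf_lt_of_mem f.2; simp at h; omega)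

/-- Whether the variable `y` occurs free. -/
def freeY {σ : Type} : MAJ σ → Bool
  | .qx _ => false
  | .qy _ => true
  | .xlty => true
  | .yltx => true
  | .not φ => freeY φ
  | .and φ₁ φ₂ => freeY φ₁ || freeY φ₂
  | .majx ψ ψs => (ψ :: ψs).attach.any (fun f => freeY f.1)
  | .majy _ _ => false
termination_by φ => sizeOf φ
decreasing_by
  all_goals simp_wf
  all_goals try omega
  all_goals (have h := List.sizeOf_lt_of_mem f.2; simp at h; omega)

/-- A closed formula: no free variables. -/
def closed {σ : Type} (φ : MAJ σ) : Prop := φ.freeX = false ∧ φ.freeY = false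

end MAJ

namespace MajTrans

variable {σ : Type} [DecidableEq σ]

/-- A TL formula that is always true. -/
def Top : TL2Formula σ := .not (.lt .one .one)
/-- A TL formula that is always false. -/
def Bot : TL2Formula σ := .lt .one .one
/-- Disjunction. -/
def Or (a b : TL2Formula σ) : TL2Formula σ := .not (.and (.not a) (.not b))

@[simp] lemma sat_Top (w : List σ) (i : ℕ) : (Top : TL2Formula σ).sat w i = true := by
  simp [Top, TL2Formula.sat, TL2Term.val]

@[simp] lemma sat_Bot (w : List σ) (i : ℕ) : (Bot : TL2Formula σ).sat w i = false := by
  simp [Bot, TL2Formula.sat, TL2Term.val]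

@[simp] lemma sat_Or (a b : TL2Formula σ) (w : List σ) (i : ℕ) :
    (Or a b).sat w i = (a.sat w i || b.sat w i) := by
  simp [Or, TL2Formula.sat]

@[simp] lemma depth_Top : (Top : TL2Formula σ).depth = 0 := rfl
@[simp] lemma depth_Bot : (Bot : TL2Formula σ).depth = 0 := rfl
@[simp] lemma depth_Or (a b : TL2Formula σ) : (Or a b).depth = max a.depth b.depth := rfl

/-- Disjunction of a list of formulas. -/
def orList : List (TL2Formula σ) → TL2Formula σ
  | [] => Bot
  | a :: l => Or a (orList l)

lemma sat_orList (l : List (TL2Formula σ)) (w : List σ) (i : ℕ) :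
    (orList l).sat w i = l.any (fun φ => φ.sat w i) := by
  induction l with
  | nil => simp [orList]
  | cons a l ih => simp [orList, ih]

lemma depth_orList (l : List (TL2Formula σ)) (d : ℕ) (h : ∀ φ ∈ l, φ.depth ≤ d) :
    (orList l).depth ≤ d := by
  induction l with
  | nil => simp [orList]
  | cons a l ih =>
    simp only [orList, depth_Or, max_le_iff]
    exact ⟨h a (by simp), ih fun φ hφ => h φ (by simp [hφ])⟩

/-- Add `n` ones to a term. -/
def addOnes (t : TL2Term σ) : ℕ → TL2Term σ
  | 0 => t
  | n + 1 => .add (addOnes t n) .one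

@[simp] lemma val_addOnes (t : TL2Term σ) (n : ℕ) (w : List σ) (i : ℕ) :
    (addOnes t n).val w i = t.val w i + n := by
  induction n with
  | zero => rfl
  | succ n ih => simp [addOnes, TL2Term.val, ih]; omega

@[simp] lemma depth_addOnes (t : TL2Term σ) (n : ℕ) : (addOnes t n).depth = t.depth := by
  induction n with
  | zero => rfl
  | succ n ih => simp [addOnes, TL2Term.depth, ih]

/-- `repAdd t n` has value `(n+1) * t`. -/
def repAdd (t : TL2Term σ) : ℕ → TL2Term σ
  | 0 => t
  | n + 1 => .add (repAdd t n) t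

@[simp] lemma val_repAdd (t : TL2Term σ) (n : ℕ) (w : List σ) (i : ℕ) :
    (repAdd t n).val w i = (n + 1) * t.val w i := by
  induction n with
  | zero => simp [repAdd]
  | succ n ih => simp [repAdd, TL2Term.val, ih]; ring

@[simp] lemma depth_repAdd (t : TL2Term σ) (n : ℕ) : (repAdd t n).depth = t.depth := by
  induction n with
  | zero => rfl
  | succ n ih => simp [repAdd, TL2Term.depth, ih]

/-- Literal: `φ` if `b` is true, `¬φ` otherwise. -/
def lit (b : Bool) (φ : TL2Formula σ) : TL2Formula σ := if b then φ else .not φ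

lemma sat_lit (b : Bool) (φ : TL2Formula σ) (w : List σ) (i : ℕ) :
    (lit b φ).sat w i = true ↔ φ.sat w i = b := by
  cases b <;> simp [lit, TL2Formula.sat]

lemma depth_lit (b : Bool) (φ : TL2Formula σ) : (lit b φ).depth = φ.depth := by
  cases b <;> simp [lit, TL2Formula.depth]

end MajTrans
namespace MajTrans
set_option linter.unusedSectionVars false

variable {σ : Type} [DecidableEq σ]

lemma list_range_sum (f : ℕ → ℕ) (n : ℕ) :
    ((List.range n).map f).sum = ∑ u ∈ Finset.range n, f u := by
  induction n with
  | zero => simp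
  | succ n ih => simp [List.range_succ, Finset.sum_range_succ, ih]

lemma filter_length_sum (f : ℕ → Bool) (l : List ℕ) :
    (l.filter f).length = (l.map (fun u => if f u then 1 else 0)).sum := by
  induction l with
  | nil => simp
  | cons a l ih => by_cases h : f a <;> simp [List.filter_cons, h, ih] <;> omega

lemma val_countL (B : TL2Formula σ) (w : List σ) (p : ℕ) :
    (TL2Term.countL B).val w p = ∑ u ∈ Finset.range (p + 1), (if B.sat w u then 1 else 0) := by
  rw [TL2Term.val, filter_length_sum, list_range_sum]

lemma val_countR (B : TL2Formula σ) (w : List σ) (p : ℕ) (hp : p < w.length) :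
    (TL2Term.countR B).val w p = ∑ u ∈ Finset.Ico p w.length, (if B.sat w u then 1 else 0) := by
  rw [TL2Term.val, filter_length_sum, list_range_sum]
  rw [Finset.range_eq_Ico, ← Finset.sum_Ico_consecutive _ (Nat.zero_le p) (le_of_lt hp)]
  have h1 : ∑ u ∈ Finset.Ico 0 p, (if (decide (p ≤ u) && B.sat w u) = true then 1 else 0) = 0 := by
    apply Finset.sum_eq_zero
    intro u hu
    simp only [Finset.mem_Ico] at hu
    simp [Nat.not_le.mpr hu.2]
  rw [h1, zero_add]
  apply Finset.sum_congr rfl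
  intro u hu
  simp only [Finset.mem_Ico] at hu
  simp [hu.1]

lemma sum_range_split (g : ℕ → ℕ) (n p : ℕ) (hp : p < n) :
    ∑ u ∈ Finset.range n, g u =
      (∑ u ∈ Finset.range p, g u) + g p + ∑ u ∈ Finset.Ico (p + 1) n, g u := by
  rw [Finset.range_eq_Ico, ← Finset.sum_Ico_consecutive _ (Nat.zero_le (p+1)) (by omega : p + 1 ≤ n),
    ← Finset.range_eq_Ico, Finset.sum_range_succ]

lemma sum_Ico_split (g : ℕ → ℕ) (n p : ℕ) (hp : p < n) :
    ∑ u ∈ Finset.Ico p n, g u = g p + ∑ u ∈ Finset.Ico (p + 1) n, g u := by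
  rw [← Finset.sum_Ico_consecutive _ (le_of_lt (Nat.lt_succ_self p)) (by omega : p + 1 ≤ n)]
  simp [Finset.sum_Ico_eq_sum_range]

/-- Swap a list-sum and a `Finset.range` sum. -/
lemma sum_swap_list {α : Type} (l : List α) (n : ℕ) (g : ℕ → α → ℕ) :
    ∑ u ∈ Finset.range n, (l.map (g u)).sum = (l.map (fun a => ∑ u ∈ Finset.range n, g u a)).sum := by
  induction l with
  | nil => simp
  | cons a l ih => simp [Finset.sum_add_distrib, ih]

lemma attach_map_sum {α : Type} (l : List α) (g : α → ℕ) :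
    (l.attach.map (fun f => g f.1)).sum = (l.map g).sum := by
  have : (l.attach.map (fun f => g f.1)) = (l.attach.map Subtype.val).map g := by
    rw [List.map_map]; rfl
  rw [this, List.attach_map_subtype_val]

lemma le_foldr_max {α : Type} (g : α → ℕ) (l : List α) (x : α) (hx : x ∈ l) :
    g x ≤ (l.map g).foldr max 0 := by
  induction l with
  | nil => simp at hx
  | cons a l ih =>
    rcases List.mem_cons.mp hx with h | h
    · subst h; simp [le_max_iff]
    · simp only [List.map_cons, List.foldr_cons, le_max_iff]
      exact Or.inr (ih h)

lemma attach_map_foldr {α : Type} (l : List α) (g : α → ℕ) :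
    (l.attach.map (fun f => g f.1)).foldr max 0 = (l.map g).foldr max 0 := by
  have : (l.attach.map (fun f => g f.1)) = (l.attach.map Subtype.val).map g := by
    rw [List.map_map]; rfl
  rw [this, List.attach_map_subtype_val]

end MajTrans
namespace MajTrans
set_option linter.unusedSectionVars false

variable {σ : Type} [DecidableEq σ]

/-- A decomposition hypothesis for a two-parameter boolean family `G w u p`:
for each order relation of `u` versus `p` there is a finite list of cells `(A, B)`
such that the `A`s cover all positions `p`, and whenever `A` holds at `p`,
`G w u p` agrees with `B` at `u` (for `u` in the given relation to `p`). -/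
def DHyp (G : List σ → ℕ → ℕ → Bool) (d : ℕ) : Prop :=
  ∀ o : Ordering, ∃ L : List (TL2Formula σ × TL2Formula σ),
    (∀ c ∈ L, c.1.depth ≤ d ∧ c.2.depth ≤ d) ∧
    (∀ (w : List σ) (p : ℕ), p < w.length → ∃ c ∈ L, c.1.sat w p = true) ∧
    (∀ (w : List σ), ∀ c ∈ L, ∀ p, p < w.length → c.1.sat w p = true →
      ∀ u, u < w.length → compare u p = o → G w u p = c.2.sat w u)

lemma DHyp.mono {G : List σ → ℕ → ℕ → Bool} {d d' : ℕ} (h : DHyp G d) (hdd : d ≤ d') :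
    DHyp G d' := by
  intro o
  obtain ⟨L, hdep, hcov, hcor⟩ := h o
  exact ⟨L, fun c hc => ⟨(hdep c hc).1.trans hdd, (hdep c hc).2.trans hdd⟩, hcov, hcor⟩

lemma DHyp.congr {G G' : List σ → ℕ → ℕ → Bool} {d : ℕ}
    (h : DHyp G d) (hGG : ∀ w u p, u < w.length → p < w.length → G w u p = G' w u p) :
    DHyp G' d := by
  intro o
  obtain ⟨L, hdep, hcov, hcor⟩ := h o
  refine ⟨L, hdep, hcov, fun w c hc p hp hA u hu ho => ?_⟩
  rw [← hGG w u p hu hp]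
  exact hcor w c hc p hp hA u hu ho

/-- `Σ_{u < |w|} [G w u p]`. -/
def SumG (G : List σ → ℕ → ℕ → Bool) (w : List σ) (p : ℕ) : ℕ :=
  ∑ u ∈ Finset.range w.length, (if G w u p then 1 else 0)

/-- From a decomposition for `G`, build cells `(A, t, a, b)` where, whenever `A` holds
at `p`, we have `t.val w p + a = SumG G w p + b`. -/
lemma single_count {G : List σ → ℕ → ℕ → Bool} {d : ℕ} (h : DHyp G d) :
    ∃ E : List (TL2Formula σ × TL2Term σ × ℕ × ℕ),
      (∀ c ∈ E, c.1.depth ≤ d ∧ c.2.1.depth ≤ d + 1) ∧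
      (∀ (w : List σ) (p : ℕ), p < w.length → ∃ c ∈ E, c.1.sat w p = true) ∧
      (∀ (w : List σ), ∀ c ∈ E, ∀ p, p < w.length → c.1.sat w p = true →
        c.2.1.val w p + c.2.2.1 = SumG G w p + c.2.2.2) := by
  obtain ⟨Llt, hdlt, hclt, hrlt⟩ := h .lt
  obtain ⟨Leq, hdeq, hceq, hreq⟩ := h .eq
  obtain ⟨Lgt, hdgt, hcgt, hrgt⟩ := h .gt
  classical
  refine ⟨Llt.flatMap fun clt => Leq.flatMap fun ceq => Lgt.flatMap fun cgt =>
      ([true, false] : List Bool).flatMap fun blt => ([true, false] : List Bool).flatMap fun beq =>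
      ([true, false] : List Bool).map fun bgt =>
      (clt.1.and (ceq.1.and (cgt.1.and ((lit blt clt.2).and ((lit beq ceq.2).and (lit bgt cgt.2))))),
       TL2Term.add (.countL clt.2) (.countR cgt.2),
       (if beq then 1 else 0),
       (if blt then 1 else 0) + (if bgt then 1 else 0)), ?_, ?_, ?_⟩
  · intro c hc
    simp only [List.mem_flatMap, List.mem_map] at hc
    obtain ⟨clt, h1, ceq, h2, cgt, h3, blt, _, beq, _, bgt, _, rfl⟩ := hc
    have d1 := hdlt clt h1; have d2 := hdeq ceq h2; have d3 := hdgt cgt h3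
    constructor
    · simp [TL2Formula.depth, depth_lit]
      omega
    · simp [TL2Term.depth]
      omega
  · intro w p hp
    obtain ⟨clt, h1, ha1⟩ := hclt w p hp
    obtain ⟨ceq, h2, ha2⟩ := hceq w p hp
    obtain ⟨cgt, h3, ha3⟩ := hcgt w p hp
    refine ⟨(clt.1.and (ceq.1.and (cgt.1.and ((lit (clt.2.sat w p) clt.2).and
        ((lit (ceq.2.sat w p) ceq.2).and (lit (cgt.2.sat w p) cgt.2))))),
       TL2Term.add (.countL clt.2) (.countR cgt.2),
       (if ceq.2.sat w p then 1 else 0),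
       (if clt.2.sat w p then 1 else 0) + (if cgt.2.sat w p then 1 else 0)), ?_, ?_⟩
    · simp only [List.mem_flatMap, List.mem_map]
      exact ⟨clt, h1, ceq, h2, cgt, h3, clt.2.sat w p, by simp, ceq.2.sat w p, by simp,
        cgt.2.sat w p, by simp, rfl⟩
    · simp only [TL2Formula.sat, ha1, ha2, ha3, Bool.true_and]
      simp only [Bool.and_eq_true]
      exact ⟨(sat_lit _ _ _ _).mpr rfl, (sat_lit _ _ _ _).mpr rfl, (sat_lit _ _ _ _).mpr rfl⟩
  · intro w c hc p hp hA
    simp only [List.mem_flatMap, List.mem_map] at hc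
    obtain ⟨clt, h1, ceq, h2, cgt, h3, blt, _, beq, _, bgt, _, rfl⟩ := hc
    simp only [TL2Formula.sat, Bool.and_eq_true] at hA
    obtain ⟨a1, a2, a3, l1, l2, l3⟩ := hA
    rw [sat_lit] at l1 l2 l3
    -- the three count identities
    have key : SumG G w p =
        (∑ u ∈ Finset.range p, (if clt.2.sat w u then 1 else 0)) + (if beq then 1 else 0)
          + ∑ u ∈ Finset.Ico (p+1) w.length, (if cgt.2.sat w u then 1 else 0) := by
      rw [SumG, sum_range_split _ _ p hp]
      congr 1
      · congr 1
        · apply Finset.sum_congr rfl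
          intro u hu
          simp only [Finset.mem_range] at hu
          rw [hrlt w clt h1 p hp a1 u (lt_trans hu hp) (by rwa [compare_lt_iff_lt])]
        · rw [hreq w ceq h2 p hp a2 p hp (by rw [compare_eq_iff_eq]), l2]
      · apply Finset.sum_congr rfl
        intro u hu
        simp only [Finset.mem_Ico] at hu
        rw [hrgt w cgt h3 p hp a3 u hu.2 (by rw [compare_gt_iff_gt]; omega)]
    have hL : (TL2Term.countL clt.2).val w p =
        (∑ u ∈ Finset.range p, (if clt.2.sat w u then 1 else 0)) + (if blt then 1 else 0) := by
      rw [val_countL, Finset.sum_range_succ, l1]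
    have hR : (TL2Term.countR cgt.2).val w p =
        (if bgt then 1 else 0) + ∑ u ∈ Finset.Ico (p+1) w.length, (if cgt.2.sat w u then 1 else 0) := by
      rw [val_countR _ _ _ hp, sum_Ico_split _ _ _ hp, l3]
    have hadd : (TL2Term.add (.countL clt.2) (.countR cgt.2)).val w p =
        (TL2Term.countL clt.2).val w p + (TL2Term.countR cgt.2).val w p := rfl
    rw [hadd, hL, hR, key]
    cases blt <;> cases beq <;> cases bgt <;> simp <;> omega

end MajTrans
namespace MajTrans
set_option linter.unusedSectionVars false

variable {σ : Type} [DecidableEq σ]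

lemma sum_construct (d : ℕ) (Gs : List (List σ → ℕ → ℕ → Bool))
    (h : ∀ G ∈ Gs, DHyp G d) :
    ∃ E : List (TL2Formula σ × TL2Term σ × ℕ × ℕ),
      (∀ c ∈ E, c.1.depth ≤ d ∧ c.2.1.depth ≤ d + 1) ∧
      (∀ (w : List σ) (p : ℕ), p < w.length → ∃ c ∈ E, c.1.sat w p = true) ∧
      (∀ (w : List σ), ∀ c ∈ E, ∀ p, p < w.length → c.1.sat w p = true →
        c.2.1.val w p + c.2.2.1 = (Gs.map (fun G => SumG G w p)).sum + c.2.2.2) := by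
  induction Gs with
  | nil =>
    refine ⟨[(Top, .one, 0, 1)], ?_, ?_, ?_⟩
    · intro c hc; simp at hc; subst hc; simp [TL2Term.depth]
    · intro w p hp; exact ⟨(Top, .one, 0, 1), by simp, by simp⟩
    · intro w c hc p hp hA
      simp at hc; subst hc
      simp [TL2Term.val]
  | cons G Gs ih =>
    obtain ⟨E1, hd1, hc1, hr1⟩ := single_count (h G (by simp))
    obtain ⟨E2, hd2, hc2, hr2⟩ := ih (fun G' hG' => h G' (by simp [hG']))
    refine ⟨E1.flatMap fun e => E2.map fun c =>
        (e.1.and c.1, TL2Term.add e.2.1 c.2.1, e.2.2.1 + c.2.2.1, e.2.2.2 + c.2.2.2), ?_, ?_, ?_⟩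
    · intro c hc
      simp only [List.mem_flatMap, List.mem_map] at hc
      obtain ⟨e, he, c2, hc2', rfl⟩ := hc
      have := hd1 e he; have := hd2 c2 hc2'
      constructor
      · simp [TL2Formula.depth]; omega
      · simp [TL2Term.depth]; omega
    · intro w p hp
      obtain ⟨e, he, hae⟩ := hc1 w p hp
      obtain ⟨c2, hc2', hac⟩ := hc2 w p hp
      refine ⟨(e.1.and c2.1, TL2Term.add e.2.1 c2.2.1, e.2.2.1 + c2.2.2.1, e.2.2.2 + c2.2.2.2), ?_, ?_⟩
      · simp only [List.mem_flatMap, List.mem_map]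
        exact ⟨e, he, c2, hc2', rfl⟩
      · simp [TL2Formula.sat, hae, hac]
    · intro w c hc p hp hA
      simp only [List.mem_flatMap, List.mem_map] at hc
      obtain ⟨e, he, c2, hc2', rfl⟩ := hc
      simp only [TL2Formula.sat, Bool.and_eq_true] at hA
      have k1 := hr1 w e he p hp hA.1
      have k2 := hr2 w c2 hc2' p hp hA.2
      have hadd : (TL2Term.add e.2.1 c2.2.1).val w p = e.2.1.val w p + c2.2.1.val w p := rfl
      simp only [List.map_cons, List.sum_cons, hadd]
      omega

/-- From decompositions of a nonempty family, build a TL formula expressing the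
majority condition. -/
lemma maj_construct (d : ℕ) (G0 : List σ → ℕ → ℕ → Bool) (Gs : List (List σ → ℕ → ℕ → Bool))
    (h : ∀ G ∈ G0 :: Gs, DHyp G d) :
    ∃ Φ : TL2Formula σ, Φ.depth ≤ d + 1 ∧
      ∀ (w : List σ) (p : ℕ), p < w.length →
        Φ.sat w p = decide (w.length * (G0 :: Gs).length <
          2 * ((G0 :: Gs).map (fun G => SumG G w p)).sum) := by
  obtain ⟨E, hdE, hcE, hrE⟩ := sum_construct d (G0 :: Gs) h
  set m := (G0 :: Gs).length with hm
  have hm1 : 1 ≤ m := by simp [hm]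
  set baseT : TL2Term σ := TL2Term.add (.countL Top) (.countR Top) with hbase
  refine ⟨orList (E.map fun c => c.1.and (.lt (addOnes (repAdd baseT (m - 1)) (2 * c.2.2.2))
      (addOnes (.add c.2.1 c.2.1) (m + 2 * c.2.2.1)))), ?_, ?_⟩
  · apply depth_orList
    intro φ hφ
    simp only [List.mem_map] at hφ
    obtain ⟨c, hc, rfl⟩ := hφ
    have := hdE c hc
    simp [TL2Formula.depth, TL2Term.depth, hbase, depth_Top]
    omega
  · intro w p hp
    have hbaseval : baseT.val w p = w.length + 1 := by
      have h1 : (TL2Term.countL (Top : TL2Formula σ)).val w p = p + 1 := by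
        rw [val_countL]; simp
      have h2 : (TL2Term.countR (Top : TL2Formula σ)).val w p = w.length - p := by
        rw [val_countR _ _ _ hp]; simp [Nat.card_Ico]
      have : baseT.val w p = (TL2Term.countL (Top : TL2Formula σ)).val w p +
          (TL2Term.countR (Top : TL2Formula σ)).val w p := rfl
      rw [this, h1, h2]; omega
    set S := ((G0 :: Gs).map (fun G => SumG G w p)).sum with hS
    have key : ∀ c ∈ E, c.1.sat w p = true →
        ((addOnes (repAdd baseT (m - 1)) (2 * c.2.2.2)).val w p <
          (addOnes (.add c.2.1 c.2.1) (m + 2 * c.2.2.1)).val w p ↔ w.length * m < 2 * S) := by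
      intro c hc hA
      have hr := hrE w c hc p hp hA
      rw [← hS] at hr
      have hv1 : (addOnes (repAdd baseT (m - 1)) (2 * c.2.2.2)).val w p =
          m * (w.length + 1) + 2 * c.2.2.2 := by
        rw [val_addOnes, val_repAdd, hbaseval, Nat.sub_add_cancel hm1]
      have hv2 : (addOnes (TL2Term.add c.2.1 c.2.1) (m + 2 * c.2.2.1)).val w p =
          2 * c.2.1.val w p + m + 2 * c.2.2.1 := by
        rw [val_addOnes]
        have : (TL2Term.add c.2.1 c.2.1).val w p = c.2.1.val w p + c.2.1.val w p := rfl
        rw [this]; omega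
      rw [hv1, hv2]
      have hexp : m * (w.length + 1) = w.length * m + m := by ring
      rw [hexp]
      generalize w.length * m = P
      omega
    rw [sat_orList]
    by_cases hcond : w.length * m < 2 * S
    · obtain ⟨c, hc, hA⟩ := hcE w p hp
      have := (key c hc hA).mpr hcond
      rw [decide_eq_true hcond]
      rw [List.any_eq_true]
      refine ⟨_, List.mem_map.mpr ⟨c, hc, rfl⟩, ?_⟩
      simp only [TL2Formula.sat, hA, Bool.true_and]
      exact decide_eq_true this
    · rw [decide_eq_false hcond, List.any_eq_false]
      intro φ hφ
      rw [List.mem_map] at hφ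
      obtain ⟨c, hc, rfl⟩ := hφ
      simp only [TL2Formula.sat, Bool.and_eq_true, decide_eq_true_eq, not_and]
      intro hA
      exact fun hlt => hcond ((key c hc hA).mp hlt)
end MajTrans
namespace MajTrans
set_option linter.unusedSectionVars false

variable {σ : Type} [DecidableEq σ]

/-- `DHyp` for a family depending only on `u`. -/
lemma DHyp_u {G : List σ → ℕ → ℕ → Bool} {d : ℕ} (B : TL2Formula σ) (hd : B.depth ≤ d)
    (hG : ∀ w u p, u < w.length → p < w.length → G w u p = B.sat w u) : DHyp G d := by
  intro o
  refine ⟨[(Top, B)], ?_, ?_, ?_⟩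
  · intro c hc; simp at hc; subst hc; simp [hd]
  · intro w p hp; exact ⟨(Top, B), by simp, by simp⟩
  · intro w c hc p hp hA u hu ho
    simp at hc; subst hc
    exact hG w u p hu hp

/-- `DHyp` for a family depending only on `p`. -/
lemma DHyp_p {G : List σ → ℕ → ℕ → Bool} {d : ℕ} (A : TL2Formula σ) (hd : A.depth ≤ d)
    (hG : ∀ w u p, u < w.length → p < w.length → G w u p = A.sat w p) : DHyp G d := by
  intro o
  refine ⟨[(A, Top), (A.not, Bot)], ?_, ?_, ?_⟩
  · intro c hc
    simp only [List.mem_cons, List.not_mem_nil, or_false] at hc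
    rcases hc with rfl | rfl <;> simp [TL2Formula.depth, TL2Term.depth, hd]
  · intro w p hp
    by_cases h : A.sat w p = true
    · exact ⟨(A, Top), by simp, h⟩
    · exact ⟨(A.not, Bot), by simp, by simp [TL2Formula.sat]; simpa using h⟩
  · intro w c hc p hp hA u hu ho
    simp only [List.mem_cons, List.not_mem_nil, or_false] at hc
    rcases hc with rfl | rfl
    · simp only [sat_Top]; rw [hG w u p hu hp]; exact hA
    · simp only [TL2Formula.sat, Bool.not_eq_true'] at hA
      simp only [sat_Bot]; rw [hG w u p hu hp]; exact hA
  
/-- `DHyp` for a family depending only on the order of `u` and `p`. -/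
lemma DHyp_ord {G : List σ → ℕ → ℕ → Bool} {d : ℕ} (b : Ordering → Bool)
    (hG : ∀ w u p, u < w.length → p < w.length → G w u p = b (compare u p)) : DHyp G d := by
  intro o
  refine ⟨[(Top, if b o then Top else Bot)], ?_, ?_, ?_⟩
  · intro c hc; simp at hc; subst hc
    constructor
    · simp
    · by_cases h : b o <;> simp [h]
  · intro w p hp; exact ⟨(Top, if b o then Top else Bot), by simp, by simp⟩
  · intro w c hc p hp hA u hu ho
    simp at hc; subst hc
    rw [hG w u p hu hp, ho]
    by_cases h : b o <;> simp [h]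

lemma DHyp.neg {G : List σ → ℕ → ℕ → Bool} {d : ℕ} (h : DHyp G d) :
    DHyp (fun w u p => !(G w u p)) d := by
  intro o
  obtain ⟨L, h1, h2, h3⟩ := h o
  refine ⟨L.map (fun c => (c.1, c.2.not)), ?_, ?_, ?_⟩
  · intro c hc
    rw [List.mem_map] at hc
    obtain ⟨c', hc', rfl⟩ := hc
    exact ⟨(h1 c' hc').1, by simpa [TL2Formula.depth] using (h1 c' hc').2⟩
  · intro w p hp
    obtain ⟨c, hc, hA⟩ := h2 w p hp
    exact ⟨(c.1, c.2.not), List.mem_map.mpr ⟨c, hc, rfl⟩, hA⟩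
  · intro w c hc p hp hA u hu ho
    rw [List.mem_map] at hc
    obtain ⟨c', hc', rfl⟩ := hc
    simp only [TL2Formula.sat]
    rw [← h3 w c' hc' p hp hA u hu ho]

lemma DHyp.conj {G G' : List σ → ℕ → ℕ → Bool} {d : ℕ} (h : DHyp G d) (h' : DHyp G' d) :
    DHyp (fun w u p => G w u p && G' w u p) d := by
  intro o
  obtain ⟨L, h1, h2, h3⟩ := h o
  obtain ⟨L', h1', h2', h3'⟩ := h' o
  refine ⟨L.flatMap fun c => L'.map fun c' => (c.1.and c'.1, c.2.and c'.2), ?_, ?_, ?_⟩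
  · intro c hc
    simp only [List.mem_flatMap, List.mem_map] at hc
    obtain ⟨a, ha, b, hb, rfl⟩ := hc
    have := h1 a ha; have := h1' b hb
    constructor <;> simp [TL2Formula.depth] <;> omega
  · intro w p hp
    obtain ⟨a, ha, hA⟩ := h2 w p hp
    obtain ⟨b, hb, hB⟩ := h2' w p hp
    refine ⟨(a.1.and b.1, a.2.and b.2), ?_, ?_⟩
    · simp only [List.mem_flatMap, List.mem_map]; exact ⟨a, ha, b, hb, rfl⟩
    · simp [TL2Formula.sat, hA, hB]
  · intro w c hc p hp hA u hu ho
    simp only [List.mem_flatMap, List.mem_map] at hc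
    obtain ⟨a, ha, b, hb, rfl⟩ := hc
    simp only [TL2Formula.sat, Bool.and_eq_true] at hA
    simp only [TL2Formula.sat]
    rw [← h3 w a ha p hp hA.1 u hu ho, ← h3' w b hb p hp hA.2 u hu ho]

lemma sizeOf_mem_majx {ψ0 : MAJ σ} {ψs : List (MAJ σ)} {f : MAJ σ} (hf : f ∈ ψ0 :: ψs) :
    sizeOf f < sizeOf (MAJ.majx ψ0 ψs) := by
  rcases List.mem_cons.mp hf with rfl | h
  · simp; omega
  · have := List.sizeOf_lt_of_mem h
    simp; omega

lemma sizeOf_mem_majy {ψ0 : MAJ σ} {ψs : List (MAJ σ)} {f : MAJ σ} (hf : f ∈ ψ0 :: ψs) :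
    sizeOf f < sizeOf (MAJ.majy ψ0 ψs) := by
  rcases List.mem_cons.mp hf with rfl | h
  · simp; omega
  · have := List.sizeOf_lt_of_mem h
    simp; omega

lemma sat_oy_irrel : ∀ (N : ℕ) (ψ : MAJ σ), sizeOf ψ ≤ N → ψ.freeY = false →
    ∀ (w : List σ) (ox oy oy' : Option ℕ), ψ.sat w ox oy = ψ.sat w ox oy' := by
  intro N
  induction N with
  | zero =>
    intro ψ h
    exfalso
    cases ψ <;> simp at h <;> omega
  | succ N ih =>
    intro ψ hs hfree w ox oy oy'
    cases ψ with
    | qx c => simp only [MAJ.sat.eq_def]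
    | qy c => rw [MAJ.freeY] at hfree; simp at hfree
    | xlty => rw [MAJ.freeY] at hfree; simp at hfree
    | yltx => rw [MAJ.freeY] at hfree; simp at hfree
    | not φ =>
      rw [MAJ.freeY] at hfree
      have hsz : sizeOf φ ≤ N := by simp at hs; omega
      simp only [MAJ.sat]
      rw [ih φ hsz hfree w ox oy oy']
    | and φ₁ φ₂ =>
      rw [MAJ.freeY] at hfree
      simp only [Bool.or_eq_false_iff] at hfree
      have hsz : sizeOf φ₁ ≤ N ∧ sizeOf φ₂ ≤ N := by simp at hs; omega
      simp only [MAJ.sat]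
      rw [ih φ₁ hsz.1 hfree.1 w ox oy oy', ih φ₂ hsz.2 hfree.2 w ox oy oy']
    | majx ψ0 ψs =>
      rw [MAJ.freeY] at hfree
      rw [List.any_eq_false] at hfree
      rw [MAJ.sat, MAJ.sat]
      have h2 : ((List.range w.length).map (fun i =>
            (((ψ0 :: ψs).attach).map (fun f => if MAJ.sat f.1 w (some i) oy then 1 else 0)).sum)) =
          ((List.range w.length).map (fun i =>
            (((ψ0 :: ψs).attach).map (fun f => if MAJ.sat f.1 w (some i) oy' then 1 else 0)).sum)) := by
      
        apply List.map_congr_left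
        intro i _
        apply congrArg List.sum
        apply List.map_congr_left
        intro f _
        have hsz : sizeOf f.1 ≤ N := by
          have := sizeOf_mem_majx f.2
          simp at hs; simp at this; omega
        have hfY : (f.1 : MAJ σ).freeY = false := by
          have := hfree f (List.mem_attach _ f)
          rwa [Bool.not_eq_true] at this
        rw [ih f.1 hsz hfY w (some i) oy oy']
      rw [h2]
    | majy ψ0 ψs => simp only [MAJ.sat]

end MajTrans
namespace MajTrans
set_option linter.unusedSectionVars false

variable {σ : Type} [DecidableEq σ]

lemma main_decomp : ∀ (N : ℕ) (ψ : MAJ σ), sizeOf ψ ≤ N →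
    DHyp (fun w u p => ψ.sat w (some p) (some u)) ψ.depth ∧
    DHyp (fun w u p => ψ.sat w (some u) (some p)) ψ.depth := by
  intro N
  induction N with
  | zero => intro ψ h; exfalso; cases ψ <;> simp at h <;> omega
  | succ N ih =>
    intro ψ hs
    cases ψ with
    | qx c =>
      constructor
      · exact DHyp_p (.sym c) (by simp [MAJ.depth, TL2Formula.depth])
          (fun w u p hu hp => by simp [MAJ.sat, TL2Formula.sat])
      · exact DHyp_u (.sym c) (by simp [MAJ.depth, TL2Formula.depth])
          (fun w u p hu hp => by simp [MAJ.sat, TL2Formula.sat])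
    | qy c =>
      constructor
      · exact DHyp_u (.sym c) (by simp [MAJ.depth, TL2Formula.depth])
          (fun w u p hu hp => by simp [MAJ.sat, TL2Formula.sat])
      · exact DHyp_p (.sym c) (by simp [MAJ.depth, TL2Formula.depth])
          (fun w u p hu hp => by simp [MAJ.sat, TL2Formula.sat])
    | xlty =>
      constructor
      · apply DHyp_ord (fun o => decide (o = Ordering.gt))
        intro w u p hu hp
        simp only [MAJ.sat]
        rw [decide_eq_decide]
        exact compare_gt_iff_gt.symm
      · apply DHyp_ord (fun o => decide (o = Ordering.lt))
        intro w u p hu hp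
        simp only [MAJ.sat]
        rw [decide_eq_decide]
        exact compare_lt_iff_lt.symm
    | yltx =>
      constructor
      · apply DHyp_ord (fun o => decide (o = Ordering.lt))
        intro w u p hu hp
        simp only [MAJ.sat]
        rw [decide_eq_decide]
        exact compare_lt_iff_lt.symm
      · apply DHyp_ord (fun o => decide (o = Ordering.gt))
        intro w u p hu hp
        simp only [MAJ.sat]
        rw [decide_eq_decide]
        exact compare_gt_iff_gt.symm
    | not φ =>
      have hsz : sizeOf φ ≤ N := by simp at hs; omega
      have hφ := ih φ hsz
      have hd : (MAJ.not φ).depth = φ.depth := by rw [MAJ.depth]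
      constructor
      · rw [hd]
        exact (hφ.1.neg).congr (fun w u p hu hp => by simp [MAJ.sat])
      · rw [hd]
        exact (hφ.2.neg).congr (fun w u p hu hp => by simp [MAJ.sat])
    | and φ₁ φ₂ =>
      have hsz : sizeOf φ₁ ≤ N ∧ sizeOf φ₂ ≤ N := by simp at hs; omega
      have h1 := ih φ₁ hsz.1
      have h2 := ih φ₂ hsz.2
      have hd : (MAJ.and φ₁ φ₂).depth = max φ₁.depth φ₂.depth := by rw [MAJ.depth]
      constructor
      · rw [hd]
        exact ((h1.1.mono (le_max_left _ _)).conj (h2.1.mono (le_max_right _ _))).congr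
          (fun w u p hu hp => by simp [MAJ.sat])
      · rw [hd]
        exact ((h1.2.mono (le_max_left _ _)).conj (h2.2.mono (le_max_right _ _))).congr
          (fun w u p hu hp => by simp [MAJ.sat])
    | majx ψ0 ψs =>
      have hsz : ∀ f ∈ ψ0 :: ψs, sizeOf f ≤ N := by
        intro f hf
        have := sizeOf_mem_majx (ψ0 := ψ0) (ψs := ψs) hf
        omega
      set F : MAJ σ → List σ → ℕ → ℕ → Bool :=
        fun f => fun w u p => f.sat w (some u) (some p) with hF
      set d0 := ((ψ0 :: ψs).map MAJ.depth).foldr max 0 with hd0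
      have hdepth : (MAJ.majx ψ0 ψs).depth = 1 + d0 := by
        rw [MAJ.depth, attach_map_foldr]
      have hH : ∀ G ∈ (F ψ0 :: ψs.map F), DHyp G d0 := by
        intro G hG
        have hG' : G ∈ (ψ0 :: ψs).map F := hG
        rw [List.mem_map] at hG'
        obtain ⟨f, hf, rfl⟩ := hG'
        exact ((ih f (hsz f hf)).2).mono (le_foldr_max MAJ.depth _ f hf)
      obtain ⟨Φ, hΦd, hΦ⟩ := maj_construct d0 (F ψ0) (ψs.map F) hH
      have hsem : ∀ (w : List σ) (ox : Option ℕ) (p : ℕ), p < w.length →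
          MAJ.sat (.majx ψ0 ψs) w ox (some p) = Φ.sat w p := by
        intro w ox p hp
        rw [hΦ w p hp, MAJ.sat]
        have hlen : (F ψ0 :: ψs.map F).length = (ψ0 :: ψs).length := by simp
        have hsum : ((List.range w.length).map (fun i =>
              (((ψ0 :: ψs).attach).map (fun f => if MAJ.sat f.1 w (some i) (some p) then 1 else 0)).sum)).sum
            = ((F ψ0 :: ψs.map F).map (fun G => SumG G w p)).sum := by
          have e1 : ((List.range w.length).map (fun i =>
                (((ψ0 :: ψs).attach).map (fun f => if MAJ.sat f.1 w (some i) (some p) then 1 else 0)).sum))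
              = ((List.range w.length).map (fun i =>
                ((ψ0 :: ψs).map (fun f => if MAJ.sat f w (some i) (some p) then 1 else 0)).sum)) :=
            List.map_congr_left (fun i _ =>
              attach_map_sum (ψ0 :: ψs) (fun f => if MAJ.sat f w (some i) (some p) then 1 else 0))
          rw [e1, list_range_sum, sum_swap_list]
          have hFc : (F ψ0 :: ψs.map F) = (ψ0 :: ψs).map F := rfl
          rw [hFc, List.map_map]
          rfl
        rw [hlen, hsum]
      constructor
      · rw [hdepth]
        apply DHyp_u Φ (by omega)
        intro w u p hu hp
        exact hsem w (some p) u hu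
      · rw [hdepth]
        apply DHyp_p Φ (by omega)
        intro w u p hu hp
        exact hsem w (some u) p hp
    | majy ψ0 ψs =>
      have hsz : ∀ f ∈ ψ0 :: ψs, sizeOf f ≤ N := by
        intro f hf
        have := sizeOf_mem_majy (ψ0 := ψ0) (ψs := ψs) hf
        omega
      set F : MAJ σ → List σ → ℕ → ℕ → Bool :=
        fun f => fun w u p => f.sat w (some p) (some u) with hF
      set d0 := ((ψ0 :: ψs).map MAJ.depth).foldr max 0 with hd0
      have hdepth : (MAJ.majy ψ0 ψs).depth = 1 + d0 := by
        rw [MAJ.depth, attach_map_foldr]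
      have hH : ∀ G ∈ (F ψ0 :: ψs.map F), DHyp G d0 := by
        intro G hG
        have hG' : G ∈ (ψ0 :: ψs).map F := hG
        rw [List.mem_map] at hG'
        obtain ⟨f, hf, rfl⟩ := hG'
        exact ((ih f (hsz f hf)).1).mono (le_foldr_max MAJ.depth _ f hf)
      obtain ⟨Φ, hΦd, hΦ⟩ := maj_construct d0 (F ψ0) (ψs.map F) hH
      have hsem : ∀ (w : List σ) (oy : Option ℕ) (p : ℕ), p < w.length →
          MAJ.sat (.majy ψ0 ψs) w (some p) oy = Φ.sat w p := by
        intro w oy p hp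
        rw [hΦ w p hp, MAJ.sat]
        have hlen : (F ψ0 :: ψs.map F).length = (ψ0 :: ψs).length := by simp
        have hsum : ((List.range w.length).map (fun j =>
              (((ψ0 :: ψs).attach).map (fun f => if MAJ.sat f.1 w (some p) (some j) then 1 else 0)).sum)).sum
            = ((F ψ0 :: ψs.map F).map (fun G => SumG G w p)).sum := by
          have e1 : ((List.range w.length).map (fun j =>
                (((ψ0 :: ψs).attach).map (fun f => if MAJ.sat f.1 w (some p) (some j) then 1 else 0)).sum))
              = ((List.range w.length).map (fun j =>
                ((ψ0 :: ψs).map (fun f => if MAJ.sat f w (some p) (some j) then 1 else 0)).sum)) :=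
            List.map_congr_left (fun j _ =>
              attach_map_sum (ψ0 :: ψs) (fun f => if MAJ.sat f w (some p) (some j) then 1 else 0))
          rw [e1, list_range_sum, sum_swap_list]
          have hFc : (F ψ0 :: ψs.map F) = (ψ0 :: ψs).map F := rfl
          rw [hFc, List.map_map]
          rfl
        rw [hlen, hsum]
      constructor
      · rw [hdepth]
        apply DHyp_p Φ (by omega)
        intro w u p hu hp
        exact hsem w (some u) p hp
      · rw [hdepth]
        apply DHyp_u Φ (by omega)
        intro w u p hu hp
        exact hsem w (some p) u hu

end MajTrans
/-- Every MAJ₂[<] formula of depth at most `k` with exactly one free variable `x` is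
equivalent, position by position, to a TL[#←,#→] formula of depth at most `k`. -/
theorem stmt14 (σ : Type) [Fintype σ] [DecidableEq σ] (k : ℕ)
    (φ : MAJ σ) (hd : φ.depth ≤ k) (hx : φ.freeX = true) (hy : φ.freeY = false) :
    ∃ φ' : TL2Formula σ, φ'.depth ≤ k ∧
      ∀ w : List σ, w ≠ [] → ∀ i : ℕ, i < w.length →
        (φ.sat w (some i) none = true ↔ φ'.sat w i = true) := by
  obtain ⟨hX, -⟩ := MajTrans.main_decomp (sizeOf φ) φ le_rfl
  obtain ⟨L, hdep, hcov, hcor⟩ := hX Ordering.eq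
  refine ⟨MajTrans.orList (L.map fun c => c.1.and c.2), ?_, ?_⟩
  · apply MajTrans.depth_orList
    intro ψ hψ
    rw [List.mem_map] at hψ
    obtain ⟨c, hc, rfl⟩ := hψ
    have h := hdep c hc
    have : (c.1.and c.2).depth = max c.1.depth c.2.depth := rfl
    rw [this]
    exact max_le (le_trans h.1 hd) (le_trans h.2 hd)
  · intro w hw i hi
    have hirr : φ.sat w (some i) none = φ.sat w (some i) (some i) :=
      MajTrans.sat_oy_irrel (sizeOf φ) φ le_rfl hy w (some i) none (some i)
    rw [hirr, MajTrans.sat_orList, List.any_eq_true]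
    constructor
    · intro hsat
      obtain ⟨c, hc, hA⟩ := hcov w i hi
      refine ⟨_, List.mem_map.mpr ⟨c, hc, rfl⟩, ?_⟩
      have hcc : φ.sat w (some i) (some i) = c.2.sat w i :=
        hcor w c hc i hi hA i hi (by rw [compare_eq_iff_eq])
      simp only [TL2Formula.sat, Bool.and_eq_true]
      exact ⟨hA, by rw [← hcc]; exact hsat⟩
    · rintro ⟨ψ', hmem, hsat'⟩
      rw [List.mem_map] at hmem
      obtain ⟨c, hc, rfl⟩ := hmem
      simp only [TL2Formula.sat, Bool.and_eq_true] at hsat'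
      have hcc : φ.sat w (some i) (some i) = c.2.sat w i :=
        hcor w c hc i hi hsat'.1 i hi (by rw [compare_eq_iff_eq])
      rw [hcc]
      exact hsat'.2
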